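/- Let f be the Davenport–Heilbronn function and suppose f(σ₀ + it₀) = 0 for real σ₀, t₀ with t₀ ≠ 0. Then also f(σ₀ − it₀) = 0, f(1 − σ₀ + it₀) = 0, and f(1 − σ₀ − it₀) = 0. In other words, the non-real zeros of the Davenport–Heilbronn function occur in quadruples symmetric with respect to the real axis and the critical line Re s = 1/2. -/

import Mathlib

open Complex DirichletCharacter

/-- The complex-conjugate character of a Dirichlet character `χ` (with values in `ℂ`). -/
noncomputable def conjChar {q : ℕ} (χ : DirichletCharacter ℂ q) : DirichletCharacter ℂ q :=
  χ.ringHomComp (starRingEnd ℂ)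

/-!
Since `χ̄ = χ⁻¹`, both the reflection `L(s̄, χ̄) = conj L(s, χ)` and the functional equation
`Λ(1 - s, χ) = N^{s - 1/2} W(χ) Λ(s, χ̄)` swap the two L-functions in `f`; as the prefactor is
real, the first gives `f(s̄) = conj f(s)`. The angle `θ` is the one with `W(χ₅) = e^{2iθ}`, hence
`W(χ̄₅) = e^{-2iθ}`, so the functional equation turns the phases `e^{∓iθ}` into `e^{±iθ}` and
`f(1 - s)` is `f(s)` times `N^{s - 1/2} γ(s) / γ(1 - s)`, which is finite off the real axis.
The value of `W(χ₅)` comes from the Gauss sum `τ(χ₅) = 2i sin(2π/5) - 2 sin(π/5)`.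
-/

open ComplexConjugate Filter
open scoped Real

namespace Real

lemma cos_two_mul_of_tan_sq_eq {θ a b : ℝ} (hθ : cos θ ≠ 0) (ha : a ≠ 0) (hab : a + b ≠ 0)
    (h : tan θ ^ 2 = (a - b) / (a + b)) : cos (2 * θ) = b / a := by
  rw [cos_two_mul, ← inv_one_add_tan_sq hθ, h]
  have : a + b + (a - b) ≠ 0 := by
    rwa [add_add_sub_cancel, ← two_mul, mul_ne_zero_iff_left two_ne_zero]
  field_simp
  ring

lemma sin_sq_pi_div_five : sin (π / 5) ^ 2 = (5 - √5) / 8 := by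
  have h5 : √5 ^ 2 = 5 := sq_sqrt (by norm_num)
  rw [sin_sq, cos_pi_div_five]
  linear_combination -h5 / 16

lemma sin_sq_two_pi_div_five : sin (2 * π / 5) ^ 2 = (5 + √5) / 8 := by
  have h5 : √5 ^ 2 = 5 := sq_sqrt (by norm_num)
  rw [mul_div_assoc, sin_two_mul, mul_pow, mul_pow, sin_sq_pi_div_five, cos_pi_div_five]
  linear_combination (3 - √5) / 32 * h5

section DavenportHeilbronnAngle

variable {θ : ℝ} (hθ : θ ∈ Set.Ioo 0 (π / 2))
  (htan : tan θ ^ 2 = (√2 - √(1 + 1 / √5)) / (√2 + √(1 + 1 / √5)))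
include hθ htan

lemma cos_two_mul_eq_of_tan_sq : cos (2 * θ) = 2 * sin (2 * π / 5) / √5 := by
  have h5 : √5 ^ 2 = 5 := sq_sqrt (by norm_num)
  have hsin : 0 ≤ sin (2 * π / 5) :=
    sin_nonneg_of_nonneg_of_le_pi (by positivity) (by linarith [pi_pos])
  rw [cos_two_mul_of_tan_sq_eq (cos_pos_of_mem_Ioo ⟨by linarith [hθ.1, pi_pos], hθ.2⟩).ne'
    (by positivity) (by positivity) htan]
  refine (sq_eq_sq₀ (by positivity) (by positivity)).1 ?_
  rw [div_pow, div_pow, mul_pow, sq_sqrt (by positivity), sq_sqrt zero_le_two,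
    sin_sq_two_pi_div_five, h5]
  field_simp
  linear_combination -8 * h5

lemma sin_two_mul_eq_of_tan_sq : sin (2 * θ) = 2 * sin (π / 5) / √5 := by
  have h5 : √5 ^ 2 = 5 := sq_sqrt (by norm_num)
  have hsin : 0 ≤ sin (π / 5) :=
    sin_nonneg_of_nonneg_of_le_pi (by positivity) (by linarith [pi_pos])
  refine (sq_eq_sq₀ (sin_nonneg_of_nonneg_of_le_pi (by linarith [hθ.1]) (by linarith [hθ.2]))
    (by positivity)).1 ?_
  rw [sin_sq, cos_two_mul_eq_of_tan_sq hθ htan, div_pow, div_pow, mul_pow, mul_pow,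
    sin_sq_two_pi_div_five, sin_sq_pi_div_five, h5]
  ring

end DavenportHeilbronnAngle

end Real

lemma ZMod.stdAddChar_natCast_im (N : ℕ) [NeZero N] (k : ℕ) :
    (ZMod.stdAddChar (k : ZMod N)).im = Real.sin (2 * π * k / N) := by
  rw [← Int.cast_natCast, ZMod.stdAddChar_coe, ← exp_ofReal_mul_I_im]
  push_cast
  ring_nf

namespace DirichletCharacter

lemma isPrimitive_of_prime_of_ne_one {R : Type*} [CommMonoidWithZero R] {p : ℕ} (hp : p.Prime)
    {χ : DirichletCharacter R p} (hχ : χ ≠ 1) : IsPrimitive χ := by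
  have : NeZero p := ⟨hp.ne_zero⟩
  exact (hp.eq_one_or_self_of_dvd _ (conductor_dvd_level χ)).resolve_left
    (hχ ∘ eq_one_iff_conductor_eq_one.2)

lemma IsPrimitive.inv {R : Type*} [CommMonoidWithZero R] {n : ℕ} {χ : DirichletCharacter R n}
    (hχ : IsPrimitive χ) : IsPrimitive χ⁻¹ :=
  (isPrimitive_def _).2 ((conductor_inv χ).trans hχ)

variable {N : ℕ}

lemma conjChar_eq_inv [NeZero N] (χ : DirichletCharacter ℂ N) : conjChar χ = χ⁻¹ :=
  MulChar.star_eq_inv χ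

lemma even_inv_iff {χ : DirichletCharacter ℂ N} : χ⁻¹.Even ↔ χ.Even := by
  rw [Even, Even, MulChar.inv_apply_eq_inv', inv_eq_one]

lemma gammaFactor_inv (χ : DirichletCharacter ℂ N) : gammaFactor χ⁻¹ = gammaFactor χ := by
  ext s
  by_cases h : χ.Even <;> simp [gammaFactor, h, even_inv_iff]

lemma gammaFactor_ne_zero_of_im_ne_zero (χ : DirichletCharacter ℂ N) {s : ℂ} (hs : s.im ≠ 0) :
    gammaFactor χ s ≠ 0 := by
  rcases χ.even_or_odd with h | h <;>
  · rw [h.gammaFactor_def, Ne, Gammaℝ_eq_zero_iff]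
    rintro ⟨n, hn⟩
    exact hs (by simpa using congrArg im hn)

variable [NeZero N]

lemma conj_gaussSum (χ : DirichletCharacter ℂ N) :
    conj (gaussSum χ ZMod.stdAddChar) = χ (-1) * gaussSum χ⁻¹ ZMod.stdAddChar := by
  rw [starRingEnd_apply, star_gaussSum_eq, AddChar.inv_mulShift]
  simpa using gaussSum_mulShift_eq χ⁻¹ ZMod.stdAddChar (-1)

lemma rootNumber_inv (χ : DirichletCharacter ℂ N) : rootNumber χ⁻¹ = conj (rootNumber χ) := by
  have hN : conj ((N : ℂ) ^ (1 / 2 : ℂ)) = (N : ℂ) ^ (1 / 2 : ℂ) := by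
    rw [← ofReal_natCast, ← ofReal_one, ← ofReal_ofNat, ← ofReal_div,
      ← ofReal_cpow (Nat.cast_nonneg N), conj_ofReal]
  rw [rootNumber, rootNumber, map_div₀, map_div₀, hN, conj_gaussSum, even_inv_iff]
  rcases χ.even_or_odd with h | h
  · rw [h, if_pos h, one_mul, pow_zero, map_one]
  · rw [h, if_neg h.not_even, pow_one, conj_I, neg_one_mul, neg_div_neg_eq]

lemma conj_LFunction_conj_of_one_lt_re (χ : DirichletCharacter ℂ N) {s : ℂ} (hs : 1 < s.re) :
    conj (LFunction χ⁻¹ (conj s)) = LFunction χ s := by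
  rw [LFunction_eq_LSeries _ (by rwa [conj_re]), LFunction_eq_LSeries _ hs, LSeries, LSeries,
    conj_tsum]
  refine tsum_congr fun n ↦ ?_
  rcases eq_or_ne n 0 with rfl | hn
  · simp
  rw [LSeries.term_of_ne_zero hn, LSeries.term_of_ne_zero hn, map_div₀, starRingEnd_apply,
    MulChar.star_apply', inv_inv, ← conj_cpow _ _ (by rw [natCast_arg]; positivity),
    conj_natCast]

lemma LFunction_inv_conj {χ : DirichletCharacter ℂ N} (hχ : χ ≠ 1) (s : ℂ) :
    LFunction χ⁻¹ (conj s) = conj (LFunction χ s) := by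
  have hL : Differentiable ℂ (conj ∘ LFunction χ⁻¹ ∘ conj) := fun z ↦
    differentiableAt_conj_conj_iff.2 (differentiable_LFunction (inv_ne_one.2 hχ) _)
  have heq : conj ∘ LFunction χ⁻¹ ∘ conj = LFunction χ :=
    AnalyticOnNhd.eq_of_eventuallyEq (fun z _ ↦ hL.analyticAt z)
      (fun z _ ↦ (differentiable_LFunction hχ).analyticAt z) (z₀ := 2) <|
      eventuallyEq_of_mem ((isOpen_lt continuous_const continuous_re).mem_nhds (by norm_num))
        fun z hz ↦ conj_LFunction_conj_of_one_lt_re χ hz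
  simpa using congrArg conj (congrFun heq s)

lemma LFunction_one_sub_of_isPrimitive {χ : DirichletCharacter ℂ N} (hχ : IsPrimitive χ)
    (hN : N ≠ 1) {s : ℂ} (hs : gammaFactor χ s ≠ 0) :
    LFunction χ (1 - s) = N ^ (s - 1 / 2) * rootNumber χ * gammaFactor χ s /
      gammaFactor χ (1 - s) * LFunction χ⁻¹ s := by
  rw [LFunction_eq_completed_div_gammaFactor χ _ (.inr hN), hχ.completedLFunction_one_sub,
    LFunction_eq_completed_div_gammaFactor χ⁻¹ _ (.inr hN), gammaFactor_inv]
  field_simp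

noncomputable def davenportHeilbronn (χ : DirichletCharacter ℂ N) (θ : ℝ) (s : ℂ) : ℂ :=
  (1 / 2) * ((Real.cos θ : ℂ))⁻¹ *
    (exp (-(I * θ)) * LFunction χ s + exp (I * θ) * LFunction (conjChar χ) s)

lemma davenportHeilbronn_conj {χ : DirichletCharacter ℂ N} (hχ : χ ≠ 1) (θ : ℝ) (s : ℂ) :
    davenportHeilbronn χ θ (conj s) = conj (davenportHeilbronn χ θ s) := by
  have hχ' : LFunction χ (conj s) = conj (LFunction χ⁻¹ s) := by
    simpa using LFunction_inv_conj (inv_ne_one.2 hχ) s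
  simp only [davenportHeilbronn, conjChar_eq_inv, LFunction_inv_conj hχ, hχ', map_mul, map_add,
    map_inv₀, ← exp_conj, map_neg, conj_I, conj_ofReal, map_div₀, map_one, map_ofNat]
  ring_nf

lemma davenportHeilbronn_one_sub {χ : DirichletCharacter ℂ N} (hχ : IsPrimitive χ) (hχ₁ : χ ≠ 1)
    {θ : ℝ} (hW : rootNumber χ = exp (2 * θ * I)) {s : ℂ} (hs : gammaFactor χ s ≠ 0) :
    davenportHeilbronn χ θ (1 - s) =
      N ^ (s - 1 / 2) * gammaFactor χ s / gammaFactor χ (1 - s) * davenportHeilbronn χ θ s := by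
  have hN : N ≠ 1 := hχ₁ ∘ level_one' χ
  have hWinv : rootNumber χ⁻¹ = exp (-(2 * θ * I)) := by
    rw [rootNumber_inv, hW, ← exp_conj, map_mul, map_mul, conj_ofReal, conj_I, map_ofNat]
    congr 1
    ring
  have hphase : exp (-(I * θ)) * exp (2 * θ * I) = exp (I * θ) := by
    rw [← exp_add]; ring_nf
  have hphase' : exp (I * θ) * exp (-(2 * θ * I)) = exp (-(I * θ)) := by
    rw [← exp_add]; ring_nf
  rw [davenportHeilbronn, davenportHeilbronn, conjChar_eq_inv,
    LFunction_one_sub_of_isPrimitive hχ hN hs,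
    LFunction_one_sub_of_isPrimitive hχ.inv hN (by rwa [gammaFactor_inv]), gammaFactor_inv, hW,
    hWinv, inv_inv]
  linear_combination
    (1 / 2 * (Real.cos θ : ℂ)⁻¹ * N ^ (s - 1 / 2) * gammaFactor χ s / gammaFactor χ (1 - s)) *
      (LFunction χ⁻¹ s * hphase + LFunction χ s * hphase')

lemma davenportHeilbronn_one_sub_eq_zero {χ : DirichletCharacter ℂ N} (hχ : IsPrimitive χ)
    (hχ₁ : χ ≠ 1) {θ : ℝ} (hW : rootNumber χ = exp (2 * θ * I)) {s : ℂ} (hs : s.im ≠ 0)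
    (h : davenportHeilbronn χ θ s = 0) : davenportHeilbronn χ θ (1 - s) = 0 := by
  rw [davenportHeilbronn_one_sub hχ hχ₁ hW (gammaFactor_ne_zero_of_im_ne_zero χ hs), h, mul_zero]

section ModFive

variable {χ : DirichletCharacter ℂ 5} (hχ : χ 2 = I)
include hχ

lemma apply_four_of_apply_two_eq_I : χ 4 = -1 := by
  rw [show (4 : ZMod 5) = 2 * 2 by decide, map_mul, hχ, I_mul_I]

lemma apply_three_of_apply_two_eq_I : χ 3 = -I := by
  rw [show (3 : ZMod 5) = 4 * 2 by decide, map_mul, apply_four_of_apply_two_eq_I hχ, hχ,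
    neg_one_mul]

lemma odd_of_apply_two_eq_I : χ.Odd := by
  rw [Odd, show (-1 : ZMod 5) = 4 by decide, apply_four_of_apply_two_eq_I hχ]

lemma ne_one_of_apply_two_eq_I : χ ≠ 1 := by
  rintro rfl
  simp [MulChar.one_apply (by decide : IsUnit (2 : ZMod 5)), Complex.ext_iff] at hχ

lemma gaussSum_of_apply_two_eq_I :
    gaussSum χ ZMod.stdAddChar = 2 * Real.sin (2 * π / 5) * I - 2 * Real.sin (π / 5) := by
  have hsum : gaussSum χ ZMod.stdAddChar =
      χ 0 * ZMod.stdAddChar 0 + χ 1 * ZMod.stdAddChar 1 + χ 2 * ZMod.stdAddChar 2 +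
        χ (-2) * ZMod.stdAddChar (-2) + χ (-1) * ZMod.stdAddChar (-1) :=
    Fin.sum_univ_five _
  rw [hsum, AddChar.map_neg_eq_conj, AddChar.map_neg_eq_conj, show (-2 : ZMod 5) = 3 by decide,
    show (-1 : ZMod 5) = 4 by decide, apply_three_of_apply_two_eq_I hχ,
    apply_four_of_apply_two_eq_I hχ, hχ, MulChar.map_nonunit _ (by decide : ¬IsUnit (0 : ZMod 5)),
    map_one]
  have h₁ := sub_conj (ZMod.stdAddChar ((1 : ℕ) : ZMod 5))
  have h₂ := sub_conj (ZMod.stdAddChar ((2 : ℕ) : ZMod 5))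
  rw [ZMod.stdAddChar_natCast_im, show 2 * π * (1 : ℕ) / (5 : ℕ) = 2 * π / 5 by push_cast; ring]
    at h₁
  rw [ZMod.stdAddChar_natCast_im, show 2 * π * (2 : ℕ) / (5 : ℕ) = π - π / 5 by push_cast; ring,
    Real.sin_pi_sub] at h₂
  push_cast at h₁ h₂ ⊢
  linear_combination h₁ + I * h₂ + 2 * sin (π / 5 : ℂ) * I_sq

lemma rootNumber_of_apply_two_eq_I :
    rootNumber χ = (2 * Real.sin (2 * π / 5) + 2 * Real.sin (π / 5) * I) / √5 := by
  have h5 : ((5 : ℕ) : ℂ) ^ (1 / 2 : ℂ) = (√5 : ℝ) := by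
    rw [Real.sqrt_eq_rpow, ofReal_cpow (by norm_num)]
    push_cast
    rfl
  rw [rootNumber, if_neg (odd_of_apply_two_eq_I hχ).not_even, pow_one,
    gaussSum_of_apply_two_eq_I hχ, h5]
  congr 1
  rw [div_I]
  linear_combination (-2 * (Real.sin (2 * π / 5) : ℂ)) * I_sq

lemma rootNumber_eq_exp_of_tan_sq {θ : ℝ} (hθ : θ ∈ Set.Ioo 0 (π / 2))
    (htan : Real.tan θ ^ 2 = (√2 - √(1 + 1 / √5)) / (√2 + √(1 + 1 / √5))) :
    rootNumber χ = exp (2 * θ * I) := by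
  rw [rootNumber_of_apply_two_eq_I hχ, show 2 * θ * I = (2 * θ : ℝ) * I by push_cast; rfl,
    exp_mul_I, ← ofReal_cos, ← ofReal_sin, Real.cos_two_mul_eq_of_tan_sq hθ htan,
    Real.sin_two_mul_eq_of_tan_sq hθ htan]
  push_cast
  ring

end ModFive

end DirichletCharacter

/-- Non-real zeros of the Davenport–Heilbronn function occur in quadruples
symmetric with respect to the real axis and the critical line `Re s = 1/2`. -/
theorem davenport_heilbronn_zero_quadruples
    (χ₅ : DirichletCharacter ℂ 5) (hχ : χ₅ (2 : ZMod 5) = I)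
    (θ : ℝ) (hθ : θ ∈ Set.Ioo 0 (Real.pi / 2))
    (htan : Real.tan θ ^ 2 =
      (Real.sqrt 2 - Real.sqrt (1 + 1 / Real.sqrt 5)) /
        (Real.sqrt 2 + Real.sqrt (1 + 1 / Real.sqrt 5)))
    (f : ℂ → ℂ)
    (hf : ∀ s : ℂ, f s = (1 / 2) * ((Real.cos θ : ℂ))⁻¹ *
      (Complex.exp (-(I * θ)) * LFunction χ₅ s +
        Complex.exp (I * θ) * LFunction (conjChar χ₅) s))
    (σ₀ t₀ : ℝ) (ht₀ : t₀ ≠ 0) (h₀ : f ((σ₀ : ℂ) + (t₀ : ℂ) * I) = 0) :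
    f ((σ₀ : ℂ) - (t₀ : ℂ) * I) = 0 ∧
      f (1 - (σ₀ : ℂ) + (t₀ : ℂ) * I) = 0 ∧
      f (1 - (σ₀ : ℂ) - (t₀ : ℂ) * I) = 0 := by
  obtain rfl : f = davenportHeilbronn χ₅ θ := funext hf
  have hχ₁ : χ₅ ≠ 1 := ne_one_of_apply_two_eq_I hχ
  have hzero_one_sub {s : ℂ} (hs : s.im ≠ 0) (h : davenportHeilbronn χ₅ θ s = 0) :
      davenportHeilbronn χ₅ θ (1 - s) = 0 :=
    davenportHeilbronn_one_sub_eq_zero (isPrimitive_of_prime_of_ne_one Nat.prime_five hχ₁) hχ₁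
      (rootNumber_eq_exp_of_tan_sq hχ hθ htan) hs h
  have hconj : conj ((σ₀ : ℂ) + t₀ * I) = σ₀ - t₀ * I := by simp [sub_eq_add_neg]
  have h₁ : davenportHeilbronn χ₅ θ (σ₀ - t₀ * I) = 0 := by
    rw [← hconj, davenportHeilbronn_conj hχ₁, h₀, map_zero]
  refine ⟨h₁, ?_, ?_⟩
  · simpa [sub_add] using hzero_one_sub (by simpa using ht₀) h₁
  · simpa [sub_sub] using hzero_one_sub (by simpa using ht₀) h₀
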